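/- arXiv:2405.08377 — 3 statements merged into one kernel-verified Lean document; each statement's English description precedes it below -/
import Mathlib

section
/- No grid graph with at least one vertex is 3-regular. -/
/-- The grid graph on a vertex set `S ⊆ ℤ²`: two vertices are adjacent exactly
when their ℓ¹ (equivalently Euclidean) distance is `1`. -/
def gridGraph (S : Set (ℤ × ℤ)) : SimpleGraph S :=
  SimpleGraph.fromRel (fun a b =>
    |(a : ℤ × ℤ).1 - (b : ℤ × ℤ).1| + |(a : ℤ × ℤ).2 - (b : ℤ × ℤ).2| = 1)

/-- No grid graph with at least one vertex is 3-regular: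
it is not the case that every vertex has exactly 3 neighbors. -/
theorem stmt_3 (S : Set (ℤ × ℤ)) (hfin : S.Finite) (hne : S.Nonempty) :
    ¬ ∀ v : S, ((gridGraph S).neighborSet v).ncard = 3 := by
  intro h
  -- pick a lexicographically maximal element of S
  obtain ⟨v, hvS, hv⟩ := Set.Finite.exists_maximalFor (fun p => toLex p) S hfin hne
  -- every neighbor of v is (v.1-1, v.2) or (v.1, v.2-1)
  have key : ∀ w : S, w ∈ (gridGraph S).neighborSet ⟨v, hvS⟩ →
      (w : ℤ × ℤ) = (v.1 - 1, v.2) ∨ (w : ℤ × ℤ) = (v.1, v.2 - 1) := by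
    intro w hw
    rw [SimpleGraph.mem_neighborSet, gridGraph, SimpleGraph.fromRel_adj] at hw
    obtain ⟨hne', habs⟩ := hw
    have habs' : |v.1 - (w : ℤ × ℤ).1| + |v.2 - (w : ℤ × ℤ).2| = 1 := by
      rcases habs with h' | h'
    
      · simpa using h'
      · simpa [abs_sub_comm] using h'
    have hnotlt : ¬ toLex v < toLex (w : ℤ × ℤ) := by
      intro hlt
      have := hv w.2 (le_of_lt hlt)
      exact absurd this (not_le.mpr hlt)
    rw [Prod.Lex.lt_iff] at hnotlt
    push_neg at hnotlt
    simp only [ofLex_toLex] at hnotlt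
    obtain ⟨hx, hy⟩ := hnotlt
    have hcases : ((w : ℤ × ℤ).1 = v.1 - 1 ∧ (w : ℤ × ℤ).2 = v.2) ∨
        ((w : ℤ × ℤ).1 = v.1 ∧ (w : ℤ × ℤ).2 = v.2 - 1) := by
      by_cases he : v.1 = (w : ℤ × ℤ).1
      · have hy' := hy he
        rcases abs_cases (v.1 - (w : ℤ × ℤ).1) with ⟨h1, _⟩ | ⟨h1, _⟩ <;>
          rcases abs_cases (v.2 - (w : ℤ × ℤ).2) with ⟨h2, _⟩ | ⟨h2, _⟩ <;> omega
      · rcases abs_cases (v.1 - (w : ℤ × ℤ).1) with ⟨h1, _⟩ | ⟨h1, _⟩ <;>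
          rcases abs_cases (v.2 - (w : ℤ × ℤ).2) with ⟨h2, _⟩ | ⟨h2, _⟩ <;> omega
    rcases hcases with ⟨hc1, hc2⟩ | ⟨hc1, hc2⟩
    · left; exact Prod.ext hc1 hc2
    · right; exact Prod.ext hc1 hc2
  -- but v has 3 neighbors, pigeonhole contradiction
  have h3 := h ⟨v, hvS⟩
  rw [Set.ncard_eq_three] at h3
  obtain ⟨a, b, c, hab, hac, hbc, hset⟩ := h3
  have ha := key a (by rw [hset]; simp)
  have hb := key b (by rw [hset]; simp)
  have hc := key c (by rw [hset]; simp)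
  rcases ha with ha | ha <;> rcases hb with hb | hb <;> rcases hc with hc | hc <;>
    first
      | exact hab (Subtype.ext (ha.trans hb.symm))
      | exact hac (Subtype.ext (ha.trans hc.symm))
      | exact hbc (Subtype.ext (hb.trans hc.symm))
end

section
/- Let H be a graph whose breakable vertices form an independent set (no edge joins two breakable vertices). Then a subset S of breakable vertices is a solution to Tree-Residue Vertex-Breaking on H if and only if the induced subgraph of H on the complement of S is a tree containing all unbreakable vertices. -/
/-- The subdivision of a simple graph `G`: one new vertex per edge, each joined to
the two endpoints of that edge.  Breaking a set `S` of vertices in TRVB is the same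
as subdividing every edge and deleting `S`. -/
def subdiv {V : Type*} (G : SimpleGraph V) : SimpleGraph (V ⊕ G.edgeSet) :=
  SimpleGraph.fromRel (fun a b => ∃ (v : V) (e : G.edgeSet),
    a = Sum.inl v ∧ b = Sum.inr e ∧ v ∈ (e : Sym2 V))

namespace TRVBAux

open SimpleGraph Walk

variable {V : Type*} (G : SimpleGraph V) (S : Set V)

abbrev Kst : Set (V ⊕ G.edgeSet) := {x | ∀ v, x = Sum.inl v → v ∉ S}

abbrev TT : SimpleGraph (Kst G S) := (subdiv G).induce (Kst G S)

abbrev AA : SimpleGraph (Sᶜ : Set V) := G.induce Sᶜ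

def vK (v : (Sᶜ : Set V)) : (Kst G S) := ⟨Sum.inl ↑v, by
  intro u h; injection h with h'; exact h' ▸ v.2⟩

def eK (e : G.edgeSet) : (Kst G S) := ⟨Sum.inr e, by intro u h; simp at h⟩

variable {G S}

lemma vK_inj {a b : (Sᶜ : Set V)} (h : vK G S a = vK G S b) : a = b := by
  apply Subtype.ext
  have := congrArg Subtype.val h
  simpa [vK] using this

lemma vK_ne_eK (a : (Sᶜ : Set V)) (e : G.edgeSet) : vK G S a ≠ eK G S e := by
  intro h; have := congrArg Subtype.val h; simp [vK, eK] at this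

lemma eK_inj {e f : G.edgeSet} (h : eK G S e = eK G S f) : e = f := by
  have := congrArg Subtype.val h; simpa [eK] using this

lemma adj_vK_eK {v : (Sᶜ : Set V)} {e : G.edgeSet} (h : ↑v ∈ (e : Sym2 V)) :
    (TT G S).Adj (vK G S v) (eK G S e) := by
  show (subdiv G).Adj (Sum.inl ↑v) (Sum.inr e)
  rw [subdiv, SimpleGraph.fromRel_adj]
  exact ⟨by simp, Or.inl ⟨↑v, e, rfl, rfl, h⟩⟩

lemma adj_eK_vK {v : (Sᶜ : Set V)} {e : G.edgeSet} (h : ↑v ∈ (e : Sym2 V)) :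
    (TT G S).Adj (eK G S e) (vK G S v) :=
  (adj_vK_eK h).symm

lemma T_adj_elim {x y : (Kst G S)} (h : (TT G S).Adj x y) :
    (∃ (v : (Sᶜ : Set V)) (e : G.edgeSet),
        x = vK G S v ∧ y = eK G S e ∧ ↑v ∈ (e : Sym2 V)) ∨
    (∃ (e : G.edgeSet) (v : (Sᶜ : Set V)),
        x = eK G S e ∧ y = vK G S v ∧ ↑v ∈ (e : Sym2 V)) := by
  have h' : (subdiv G).Adj x.val y.val := h
  rw [subdiv, SimpleGraph.fromRel_adj] at h'
  rcases h'.2 with ⟨v, e, hx, hy, hm⟩ | ⟨v, e, hy, hx, hm⟩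
  · exact Or.inl ⟨⟨v, x.2 v hx⟩, e, Subtype.ext hx, Subtype.ext hy, hm⟩
  · exact Or.inr ⟨e, ⟨v, y.2 v hy⟩, Subtype.ext hx, Subtype.ext hy, hm⟩

lemma T_adj_vK {v : (Sᶜ : Set V)} {y : (Kst G S)} (h : (TT G S).Adj (vK G S v) y) :
    ∃ e : G.edgeSet, y = eK G S e ∧ ↑v ∈ (e : Sym2 V) := by
  rcases T_adj_elim h with ⟨v', e, hx, hy, hm⟩ | ⟨e, v', hx, _, _⟩
  · obtain rfl := vK_inj hx
    exact ⟨e, hy, hm⟩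
  · exact absurd hx (vK_ne_eK _ _)

lemma T_adj_eK {e : G.edgeSet} {y : (Kst G S)} (h : (TT G S).Adj (eK G S e) y) :
    ∃ v : (Sᶜ : Set V), y = vK G S v ∧ ↑v ∈ (e : Sym2 V) := by
  rcases T_adj_elim h with ⟨v', e', hx, _, _⟩ | ⟨e', v', hx, hy, hm⟩
  · exact absurd hx.symm (vK_ne_eK _ _)
  · obtain rfl := eK_inj hx
    exact ⟨v', hy, hm⟩

lemma edge_endpoint {breakable : Set V}
    (hind : ∀ u v, u ∈ breakable → v ∈ breakable → ¬ G.Adj u v)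
    (hS : S ⊆ breakable) (e : G.edgeSet) :
    ∃ v : (Sᶜ : Set V), ↑v ∈ (e : Sym2 V) := by
  obtain ⟨ev, he⟩ := e
  revert he
  induction ev using Sym2.ind with
  | _ u w =>
    intro he
    have hadj : G.Adj u w := (SimpleGraph.mem_edgeSet G).mp he
    by_cases hu : u ∈ S
    · have hw : w ∉ S := fun hw => hind u w (hS hu) (hS hw) hadj
      exact ⟨⟨w, hw⟩, Sym2.mem_mk_right _ _⟩
    · exact ⟨⟨u, hu⟩, Sym2.mem_mk_left _ _⟩

/-! ### Lifting walks from `AA` to `TT` -/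

def edgeOf {a b : (Sᶜ : Set V)} (h : (AA G S).Adj a b) : G.edgeSet :=
  ⟨s(↑a, ↑b), G.mem_edgeSet.mpr h⟩

lemma mem_edgeOf_left {a b : (Sᶜ : Set V)} (h : (AA G S).Adj a b) :
    (↑a : V) ∈ (edgeOf h : Sym2 V) := Sym2.mem_mk_left _ _

lemma mem_edgeOf_right {a b : (Sᶜ : Set V)} (h : (AA G S).Adj a b) :
    (↑b : V) ∈ (edgeOf h : Sym2 V) := Sym2.mem_mk_right _ _

def lift : ∀ {v w : (Sᶜ : Set V)}, (AA G S).Walk v w →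
    (TT G S).Walk (vK G S v) (vK G S w)
  | _, _, .nil => .nil
  | _, _, .cons h q =>
      .cons (adj_vK_eK (mem_edgeOf_left h))
        (.cons (adj_eK_vK (mem_edgeOf_right h)) (lift q))

lemma lift_length {v w : (Sᶜ : Set V)} (q : (AA G S).Walk v w) :
    (lift q).length = 2 * q.length := by
  induction q with
  | nil => simp [lift]
  | cons h q ih => simp [lift, ih]; omega

lemma lift_support_vK (a : (Sᶜ : Set V)) {v w : (Sᶜ : Set V)} (q : (AA G S).Walk v w) :
    vK G S a ∈ (lift q).support ↔ a ∈ q.support := by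
  induction q with
  | nil =>
    simp only [lift, Walk.support_nil, List.mem_singleton]
    exact ⟨fun h => vK_inj h, fun h => h ▸ rfl⟩
  | cons h q ih =>
    simp only [lift, Walk.support_cons, List.mem_cons]
    constructor
    · rintro (h1 | h1 | h1)
      · exact Or.inl (vK_inj h1)
      · exact absurd h1 (vK_ne_eK _ _)
      · exact Or.inr (ih.mp h1)
    · rintro (rfl | h1)
      · exact Or.inl rfl
      · exact Or.inr (Or.inr (ih.mpr h1))

lemma lift_support_eK (e : G.edgeSet) {v w : (Sᶜ : Set V)} (q : (AA G S).Walk v w) :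
    eK G S e ∈ (lift q).support ↔
      (e : Sym2 V) ∈ q.edges.map (Sym2.map (fun x : (Sᶜ : Set V) => (x : V))) := by
  induction q with
  | nil =>
    simp only [lift, Walk.support_nil, List.mem_singleton, Walk.edges_nil,
      List.map_nil, List.not_mem_nil, iff_false]
    exact fun h => vK_ne_eK _ _ h.symm
  | cons h q ih =>
    simp only [lift, Walk.support_cons, List.mem_cons, Walk.edges_cons, List.map_cons,
      Sym2.map_pair_eq]
    constructor
    · rintro (h1 | h1 | h1)
      · exact absurd h1.symm (vK_ne_eK _ _)
      · exact Or.inl (congrArg Subtype.val (eK_inj h1))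
      · exact Or.inr (ih.mp h1)
    · rintro (h1 | h1)
      · refine Or.inr (Or.inl ?_)
        congr 1
        exact Subtype.ext h1
      · exact Or.inr (Or.inr (ih.mpr h1))

lemma not_mem_mapped_edges {a b c d : (Sᶜ : Set V)} {q : (AA G S).Walk c d}
    (ha : a ∉ q.support) :
    s(↑a, (↑b : V)) ∉ q.edges.map (Sym2.map (fun x : (Sᶜ : Set V) => (x : V))) := by
  intro hmem
  obtain ⟨ε, hε, hmap⟩ := List.mem_map.mp hmem
  have hmm : (↑a : V) ∈ Sym2.map (fun x : (Sᶜ : Set V) => (x : V)) ε :=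
    hmap ▸ Sym2.mem_mk_left _ _
  obtain ⟨c', hcε, hc⟩ := Sym2.mem_map.mp hmm
  obtain rfl : c' = a := Subtype.ext hc
  revert hε hcε
  induction ε using Sym2.ind with
  | _ x y =>
    intro hε hcε
    rcases Sym2.mem_iff.mp hcε with rfl | rfl
    · exact ha (q.fst_mem_support_of_mem_edges hε)
    · exact ha (q.snd_mem_support_of_mem_edges hε)

lemma lift_isPath {v w : (Sᶜ : Set V)} (q : (AA G S).Walk v w) (hq : q.IsPath) :
    (lift q).IsPath := by
  induction q with
  | nil => exact Walk.IsPath.nil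
  | cons h q ih =>
    rw [Walk.cons_isPath_iff] at hq
    obtain ⟨hq', hvs⟩ := hq
    show (Walk.cons _ (Walk.cons _ (lift q))).IsPath
    rw [Walk.cons_isPath_iff, Walk.cons_isPath_iff]
    refine ⟨⟨ih hq', ?_⟩, ?_⟩
    · rw [lift_support_eK]
      exact not_mem_mapped_edges hvs
    · rw [Walk.support_cons, List.mem_cons]
      push_neg
      exact ⟨vK_ne_eK _ _, fun hc => hvs ((lift_support_vK _ _).mp hc)⟩

lemma liftReach {v w : (Sᶜ : Set V)} (h : (AA G S).Reachable v w) :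
    (TT G S).Reachable (vK G S v) (vK G S w) := by
  obtain ⟨q⟩ := h
  exact ⟨lift q⟩

/-! ### Projecting walks from `TT` to `AA` -/

lemma proj : ∀ (n : ℕ) {v w : (Sᶜ : Set V)}
    (p : (TT G S).Walk (vK G S v) (vK G S w)), p.IsPath → p.length = n →
    ∃ q : (AA G S).Walk v w, q.IsPath ∧ 2 * q.length = n ∧
      ∀ a : (Sᶜ : Set V), a ∈ q.support → vK G S a ∈ p.support := by
  intro n
  induction n using Nat.strong_induction_on with
  | _ n IH =>
    intro v w p hp hl
    rcases Nat.eq_zero_or_pos n with rfl | hpos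
    · obtain rfl := vK_inj (Walk.eq_of_length_eq_zero hl)
      refine ⟨.nil, Walk.IsPath.nil, by simp, ?_⟩
      intro a ha
      simp only [Walk.support_nil, List.mem_singleton] at ha
      subst ha
      exact p.start_mem_support
    · have hnn : ¬ p.Nil := by rw [Walk.not_nil_iff_lt_length]; omega
      obtain ⟨b, h1, p1, rfl⟩ := Walk.not_nil_iff.mp hnn
      obtain ⟨e, rfl, hve⟩ := T_adj_vK h1
      have hnn1 : ¬ p1.Nil := by
        rw [Walk.nil_iff_length_eq]
        intro h0
        exact vK_ne_eK w e (Walk.eq_of_length_eq_zero h0).symm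
      obtain ⟨z, h2, p2, rfl⟩ := Walk.not_nil_iff.mp hnn1
      obtain ⟨u, rfl, hue⟩ := T_adj_eK h2
      rw [Walk.cons_isPath_iff] at hp
      obtain ⟨hp1, hv1⟩ := hp
      rw [Walk.cons_isPath_iff] at hp1
      obtain ⟨hp2, he2⟩ := hp1
      rw [Walk.support_cons, List.mem_cons] at hv1
      push_neg at hv1
      obtain ⟨hne1, hv2⟩ := hv1
      have hvu : v ≠ u := by
        intro h; subst h; exact hv2 p2.start_mem_support
      have hee : (e : Sym2 V) = s(↑v, ↑u) :=
        (Sym2.mem_and_mem_iff (fun hc => hvu (Subtype.ext hc))).mp ⟨hve, hue⟩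
      have hadj : (AA G S).Adj v u := by
        have h' := e.2
        rw [hee] at h'
        exact (SimpleGraph.mem_edgeSet G).mp h'
      simp only [Walk.length_cons] at hl
      obtain ⟨q2, hq2, hql, hqs⟩ := IH p2.length (by omega) p2 hp2 rfl
      refine ⟨.cons hadj q2, ?_, ?_, ?_⟩
      · rw [Walk.cons_isPath_iff]
        exact ⟨hq2, fun hvq => hv2 (hqs v hvq)⟩
      · rw [Walk.length_cons]; omega
      · intro a ha
        rw [Walk.support_cons, List.mem_cons] at ha
        rcases ha with rfl | ha
        · exact Walk.start_mem_support _
        · rw [Walk.support_cons, Walk.support_cons]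
          exact List.mem_cons_of_mem _ (List.mem_cons_of_mem _ (hqs a ha))

lemma projReach : ∀ (n : ℕ) {v w : (Sᶜ : Set V)}
    (p : (TT G S).Walk (vK G S v) (vK G S w)), p.length = n →
    (AA G S).Reachable v w := by
  intro n
  induction n using Nat.strong_induction_on with
  | _ n IH =>
    intro v w p hl
    rcases Nat.eq_zero_or_pos n with rfl | hpos
    · obtain rfl := vK_inj (Walk.eq_of_length_eq_zero hl)
      exact Reachable.refl _
    · have hnn : ¬ p.Nil := by rw [Walk.not_nil_iff_lt_length]; omega
      obtain ⟨b, h1, p1, rfl⟩ := Walk.not_nil_iff.mp hnn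
      obtain ⟨e, rfl, hve⟩ := T_adj_vK h1
      have hnn1 : ¬ p1.Nil := by
        rw [Walk.nil_iff_length_eq]
        intro h0
        exact vK_ne_eK w e (Walk.eq_of_length_eq_zero h0).symm
      obtain ⟨z, h2, p2, rfl⟩ := Walk.not_nil_iff.mp hnn1
      obtain ⟨u, rfl, hue⟩ := T_adj_eK h2
      simp only [Walk.length_cons] at hl
      have hr : (AA G S).Reachable u w := IH p2.length (by omega) p2 rfl
      by_cases hvu : v = u
      · exact hvu ▸ hr
      · have hee : (e : Sym2 V) = s(↑v, ↑u) :=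
          (Sym2.mem_and_mem_iff (fun hc => hvu (Subtype.ext hc))).mp ⟨hve, hue⟩
        have hadj : (AA G S).Adj v u := by
          have h' := e.2
          rw [hee] at h'
          exact (SimpleGraph.mem_edgeSet G).mp h'
        exact hadj.reachable.trans hr

/-! ### Connectivity transfer -/

lemma reach_vK {breakable : Set V}
    (hind : ∀ u v, u ∈ breakable → v ∈ breakable → ¬ G.Adj u v)
    (hS : S ⊆ breakable) (x : (Kst G S)) :
    ∃ v : (Sᶜ : Set V), (TT G S).Reachable x (vK G S v) := by
  obtain ⟨xv, hx⟩ := x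
  cases xv with
  | inl a =>
    have ha : a ∉ S := hx a rfl
    refine ⟨⟨a, ha⟩, ?_⟩
    have hEq : (⟨Sum.inl a, hx⟩ : (Kst G S)) = vK G S ⟨a, ha⟩ := Subtype.ext rfl
    rw [hEq]
  | inr e =>
    obtain ⟨v, hv⟩ := edge_endpoint hind hS e
    refine ⟨v, ?_⟩
    have hEq : (⟨Sum.inr e, hx⟩ : (Kst G S)) = eK G S e := Subtype.ext rfl
    rw [hEq]
    exact (adj_eK_vK hv).reachable

lemma conn_T_of_A {breakable : Set V}
    (hind : ∀ u v, u ∈ breakable → v ∈ breakable → ¬ G.Adj u v)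
    (hS : S ⊆ breakable) (h : (AA G S).Connected) : (TT G S).Connected := by
  rw [SimpleGraph.connected_iff]
  refine ⟨?_, ?_⟩
  · intro x y
    obtain ⟨a, hxa⟩ := reach_vK hind hS x
    obtain ⟨b, hyb⟩ := reach_vK hind hS y
    exact hxa.trans ((liftReach (h.preconnected a b)).trans hyb.symm)
  · obtain ⟨v⟩ := h.nonempty
    exact ⟨vK G S v⟩

lemma conn_A_of_T {breakable : Set V}
    (hind : ∀ u v, u ∈ breakable → v ∈ breakable → ¬ G.Adj u v)
    (hS : S ⊆ breakable) (h : (TT G S).Connected) : (AA G S).Connected := by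
  rw [SimpleGraph.connected_iff]
  refine ⟨?_, ?_⟩
  · intro v w
    obtain ⟨p⟩ := h.preconnected (vK G S v) (vK G S w)
    exact projReach p.length p rfl
  · obtain ⟨x⟩ := h.nonempty
    obtain ⟨v, -⟩ := reach_vK hind hS x
    exact ⟨v⟩

/-! ### Acyclicity transfer -/

lemma acyclic_A_of_T (hT : (TT G S).IsAcyclic) : (AA G S).IsAcyclic := by
  intro a c hc
  have h3 := hc.three_le_length
  have hnn : ¬ c.Nil := by rw [Walk.nil_iff_length_eq]; omega
  obtain ⟨b, h, d, rfl⟩ := Walk.not_nil_iff.mp hnn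
  have hd : d.IsPath := by
    rw [Walk.isPath_def]
    simpa [Walk.support_cons] using hc.support_nodup
  have hld := lift_isPath d hd
  have hba : b ≠ a := fun hEq => (hEq ▸ h).ne' rfl
  have hp0 : (Walk.cons (adj_vK_eK (mem_edgeOf_right h))
      (Walk.cons (adj_eK_vK (mem_edgeOf_left h)) Walk.nil)).IsPath := by
    rw [Walk.cons_isPath_iff, Walk.cons_isPath_iff]
    refine ⟨⟨Walk.IsPath.nil, ?_⟩, ?_⟩
    · simp only [Walk.support_nil, List.mem_singleton]
      exact fun hc' => vK_ne_eK _ _ hc'.symm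
    · intro hmem
      simp only [Walk.support_cons, Walk.support_nil, List.mem_cons, List.mem_singleton,
        List.not_mem_nil, or_false] at hmem
      rcases hmem with hc' | hc'
      · exact vK_ne_eK _ _ hc'
      · exact hba (vK_inj hc')
  have hEq := SimpleGraph.isAcyclic_iff_path_unique.mp hT ⟨lift d, hld⟩
    ⟨Walk.cons (adj_vK_eK (mem_edgeOf_right h))
      (Walk.cons (adj_eK_vK (mem_edgeOf_left h)) Walk.nil), hp0⟩
  have hWalkEq : lift d = Walk.cons (adj_vK_eK (mem_edgeOf_right h))
      (Walk.cons (adj_eK_vK (mem_edgeOf_left h)) Walk.nil) := congrArg Subtype.val hEq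
  have hlen : (lift d).length = 2 := by
    rw [hWalkEq]
    simp
  rw [lift_length] at hlen
  simp only [Walk.length_cons] at h3
  omega

lemma no_cycle_at_vK (hA : (AA G S).IsAcyclic) {v : (Sᶜ : Set V)}
    (c : (TT G S).Walk (vK G S v) (vK G S v)) : ¬ c.IsCycle := by
  intro hc
  have h3 := hc.three_le_length
  have hnn : ¬ c.Nil := by rw [Walk.nil_iff_length_eq]; omega
  obtain ⟨b, h1, p1, rfl⟩ := Walk.not_nil_iff.mp hnn
  obtain ⟨e, rfl, hve⟩ := T_adj_vK h1
  have hnn1 : ¬ p1.Nil := by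
    rw [Walk.nil_iff_length_eq]
    intro h0
    exact vK_ne_eK v e (Walk.eq_of_length_eq_zero h0).symm
  obtain ⟨z, h2, p2, rfl⟩ := Walk.not_nil_iff.mp hnn1
  obtain ⟨u, rfl, hue⟩ := T_adj_eK h2
  have hsupp' : (eK G S e :: p2.support).Nodup := by
    simpa [Walk.support_cons] using hc.support_nodup
  have hp2 : p2.IsPath := by
    rw [Walk.isPath_def]
    exact (List.nodup_cons.mp hsupp').2
  have heKp2 : eK G S e ∉ p2.support := (List.nodup_cons.mp hsupp').1
  have hedges := hc.edges_nodup
  have huv : u ≠ v := by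
    intro hEq
    subst hEq
    rw [Walk.edges_cons, Walk.edges_cons, List.nodup_cons] at hedges
    exact hedges.1 (List.mem_cons.mpr (Or.inl (Sym2.eq_swap)))
  have hee : (e : Sym2 V) = s(↑u, ↑v) :=
    (Sym2.mem_and_mem_iff (fun hcc => huv (Subtype.ext hcc))).mp ⟨hue, hve⟩
  have hadj : (AA G S).Adj u v := by
    have h' := e.2
    rw [hee] at h'
    exact (SimpleGraph.mem_edgeSet G).mp h'
  obtain ⟨q, hq, hql, -⟩ := proj p2.length p2 hp2 rfl
  have hq0 : (Walk.cons hadj Walk.nil).IsPath := by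
    rw [Walk.cons_isPath_iff]
    refine ⟨Walk.IsPath.nil, ?_⟩
    simp only [Walk.support_nil, List.mem_singleton]
    exact fun hc' => huv (Subtype.ext (congrArg Subtype.val hc'))
  have hEq := SimpleGraph.isAcyclic_iff_path_unique.mp hA ⟨q, hq⟩ ⟨Walk.cons hadj Walk.nil, hq0⟩
  have hql1 : q.length = 1 := by
    have h' : q = Walk.cons hadj Walk.nil := Subtype.ext_iff.mp hEq
    rw [h']
    simp
  have hp2len : p2.length = 2 := by omega
  have hnn2 : ¬ p2.Nil := by rw [Walk.nil_iff_length_eq]; omega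
  obtain ⟨m, g1, r1, rfl⟩ := Walk.not_nil_iff.mp hnn2
  obtain ⟨e2, rfl, hue2⟩ := T_adj_vK g1
  have hnn3 : ¬ r1.Nil := by
    rw [Walk.nil_iff_length_eq]
    intro h0
    exact vK_ne_eK v e2 (Walk.eq_of_length_eq_zero h0).symm
  obtain ⟨z2, g2, r2, rfl⟩ := Walk.not_nil_iff.mp hnn3
  obtain ⟨u2, rfl, hu2e2⟩ := T_adj_eK g2
  have hr2 : r2.length = 0 := by
    simp only [Walk.length_cons] at hp2len
    omega
  have hu2v : u2 = v := vK_inj (Walk.eq_of_length_eq_zero hr2)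
  rw [hu2v] at hu2e2
  have he2 : (e2 : Sym2 V) = s(↑u, ↑v) :=
    (Sym2.mem_and_mem_iff (fun hcc => huv (Subtype.ext hcc))).mp ⟨hue2, hu2e2⟩
  obtain rfl : e2 = e := Subtype.ext (he2.trans hee.symm)
  exact heKp2 (by
    rw [Walk.support_cons]
    exact List.mem_cons_of_mem _ (Walk.start_mem_support _))

lemma acyclic_T_of_A (hA : (AA G S).IsAcyclic) : (TT G S).IsAcyclic := by
  classical
  intro x c hc
  have h3 := hc.three_le_length
  have hnn : ¬ c.Nil := by rw [Walk.nil_iff_length_eq]; omega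
  obtain ⟨b, h1, d, rfl⟩ := Walk.not_nil_iff.mp hnn
  rcases T_adj_elim h1 with ⟨v, e, hx, -, -⟩ | ⟨e, v, -, hy, -⟩
  · subst hx
    exact no_cycle_at_vK hA _ hc
  · subst hy
    have hb : vK G S v ∈ (Walk.cons h1 d).support := by
      rw [Walk.support_cons]
      exact List.mem_cons_of_mem _ d.start_mem_support
    exact no_cycle_at_vK hA _ (hc.rotate hb)

end TRVBAux

/-- Let `H` be a graph whose breakable vertices form an independent set
(no edge joins two breakable vertices).  Then a subset `S` of breakable vertices is
a solution to Tree-Residue Vertex-Breaking on `H` (i.e. the graph obtained by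
subdividing every edge and deleting `S` is a tree) if and only if the induced
subgraph of `H` on the complement of `S` is a tree containing all unbreakable
vertices. -/
theorem stmt_9 {V : Type*} (G : SimpleGraph V) (breakable : Set V)
    (hind : ∀ u v, u ∈ breakable → v ∈ breakable → ¬ G.Adj u v)
    (S : Set V) (hS : S ⊆ breakable) :
    ((subdiv G).induce {x | ∀ v, x = Sum.inl v → v ∉ S}).IsTree ↔
      ((G.induce Sᶜ).IsTree ∧ ∀ v, v ∉ breakable → v ∈ Sᶜ) := by
  have key : (TRVBAux.TT G S).IsTree ↔ (TRVBAux.AA G S).IsTree := by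
    rw [SimpleGraph.isTree_iff, SimpleGraph.isTree_iff]
    constructor
    · rintro ⟨hc, ha⟩
      exact ⟨TRVBAux.conn_A_of_T hind hS hc, TRVBAux.acyclic_A_of_T ha⟩
    · rintro ⟨hc, ha⟩
      exact ⟨TRVBAux.conn_T_of_A hind hS hc, TRVBAux.acyclic_T_of_A ha⟩
  constructor
  · intro h
    exact ⟨key.mp h, fun v hv hvS => hv (hS hvS)⟩
  · rintro ⟨h, -⟩
    exact key.mpr h
end

section
/- Every Hamiltonian cycle of an m×n rectangular grid graph with m, n ≥ 2 exists if and only if mn is even; in particular, if both m and n are odd, the rectangular grid graph has no Hamiltonian cycle. -/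
/-- The m×n rectangular grid graph, on vertex set `Fin m × Fin n ≅ {0,…,m−1}×{0,…,n−1}`,
with edges between points at distance 1. -/
def rectGrid (m n : ℕ) : SimpleGraph (Fin m × Fin n) :=
  SimpleGraph.fromRel (fun a b =>
    (a.1 = b.1 ∧ (a.2 : ℕ) + 1 = (b.2 : ℕ)) ∨
    (a.2 = b.2 ∧ (a.1 : ℕ) + 1 = (b.1 : ℕ)))

namespace RectGridAux

open SimpleGraph List

/-! ### Walk-building infrastructure -/

variable {V : Type*} {G : SimpleGraph V}

/-- Build a walk from a chain of adjacencies. -/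
def mkWalk (G : SimpleGraph V) : ∀ (l : List V) (u v : V),
    List.Chain G.Adj u (l ++ [v]) → G.Walk u v
  | [], u, v, h => Walk.cons (by simpa using List.chain_cons.mp h |>.1) Walk.nil
  | w :: t, u, v, h =>
    Walk.cons (List.chain_cons.mp h).1 (mkWalk G t w v (List.chain_cons.mp h).2)

lemma mkWalk_support (G : SimpleGraph V) : ∀ (l : List V) (u v : V)
    (h : List.Chain G.Adj u (l ++ [v])),
    (mkWalk G l u v h).support = u :: (l ++ [v])
  | [], u, v, h => by simp [mkWalk]
  | w :: t, u, v, h => by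
    simp [mkWalk]; exact mkWalk_support G t w v _

lemma mkWalk_length (G : SimpleGraph V) : ∀ (l : List V) (u v : V)
    (h : List.Chain G.Adj u (l ++ [v])),
    (mkWalk G l u v h).length = l.length + 1
  | [], u, v, h => by simp [mkWalk]
  | w :: t, u, v, h => by
    simp [mkWalk]; exact mkWalk_length G t w v _

lemma no_closing_edge {w u : V} (P : G.Walk w u) (hP : P.support.Nodup)
    (hlen : P.length ≠ 1) : s(u, w) ∉ P.edges := by
  intro hmem
  cases P with
  | nil => simp at hmem
  | @cons _ x _ h Q =>
    rw [Walk.support_cons, List.nodup_cons] at hP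
    rw [Walk.edges_cons, List.mem_cons] at hmem
    rcases hmem with heq | hmem
    · rw [Sym2.eq_iff] at heq
      rcases heq with ⟨hu, hw⟩ | ⟨hu, _⟩
      · exact hP.1 (hu ▸ Q.end_mem_support)
      · subst hu
        have : Q.support.Nodup := hP.2
        have hQnil : Q = Walk.nil := by
          cases Q with
          | nil => rfl
          | cons h' Q' =>
            exfalso
            rw [Walk.support_cons, List.nodup_cons] at this
            exact this.1 (Q'.end_mem_support)
        subst hQnil
        simp at hlen
    · exact hP.1 (Q.snd_mem_support_of_mem_edges hmem)

lemma chain_append_last {R : V → V → Prop} : ∀ (l : List V) (u v : V),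
    List.Chain R u l → R ((u :: l).getLast (by simp)) v → List.Chain R u (l ++ [v])
  | [], u, v, _, hR => by simpa [List.Chain] using hR
  | w :: t, u, v, h, hR => by
    simp only [List.Chain] at h ⊢
    rw [List.chain_cons] at h
    rw [List.cons_append, List.chain_cons]
    refine ⟨h.1, chain_append_last t w v h.2 ?_⟩
    simpa [List.getLast_cons] using hR

lemma hamOfList [Fintype V] [DecidableEq V] (G : SimpleGraph V) (L : List V)
    (hlen : L.length = Fintype.card V) (h4 : 4 ≤ L.length) (hnd : L.Nodup)
    (hch : L.Chain' G.Adj)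
    (hcl : G.Adj (L.getLast (by rintro rfl; simp at h4)) (L.head (by rintro rfl; simp at h4))) :
    ∃ u, ∃ p : G.Walk u u, p.IsHamiltonianCycle := by
  match L, hlen, h4, hnd, hch, hcl with
  | u :: w :: rest, hlen, h4, hnd, hch, hcl =>
  have hchain : List.Chain G.Adj u ((w :: rest) ++ [u]) := by
    refine chain_append_last _ u u hch ?_
    simpa using hcl
  refine ⟨u, mkWalk G (w :: rest) u u hchain, ?_⟩
  have hsupp := mkWalk_support G (w :: rest) u u hchain
  have hndfull : ((w :: rest) ++ [u]).Nodup := by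
    rw [List.nodup_append]
    refine ⟨hnd.of_cons, by simp, ?_⟩
    exact fun a ha b hb hab => (List.nodup_cons.mp hnd).1 (by simp at hb; subst hb; exact hab ▸ ha)
  rw [Walk.isHamiltonianCycle_iff_isCycle_and_support_count_tail_eq_one]
  constructor
  · have hc2 : List.Chain G.Adj w (rest ++ [u]) := (List.chain_cons.mp hchain).2
    show (Walk.cons _ (mkWalk G rest w u hc2)).IsCycle
    rw [Walk.cons_isCycle_iff]
    have hsupp2 := mkWalk_support G rest w u hc2
    have hnd2 : (mkWalk G rest w u hc2).support.Nodup := by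
      rw [hsupp2]; exact hndfull
    constructor
    · rwa [Walk.isPath_def]
    · refine no_closing_edge _ hnd2 ?_
      rw [mkWalk_length]
      have : (u :: w :: rest).length = Fintype.card V := hlen
      simp at this h4
      omega
  · intro a
    rw [hsupp]
    simp only [List.tail_cons]
    have hmem : a ∈ (w :: rest) ++ [u] := by
      have hcard : ((w :: rest) ++ [u]).toFinset.card = Fintype.card V := by
        rw [List.toFinset_card_of_nodup hndfull]
        simp at hlen ⊢
        omega
      have : ((w :: rest) ++ [u]).toFinset = Finset.univ :=
        Finset.eq_univ_of_card _ hcard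
      rw [← List.mem_toFinset, this]; exact Finset.mem_univ a
    exact List.count_eq_one_of_mem hndfull hmem

/-! ### Parity (necessity) -/

def colr {m n : ℕ} (v : Fin m × Fin n) : ZMod 2 := ((v.1 : ℕ) : ZMod 2) + ((v.2 : ℕ) : ZMod 2)

lemma adj_colr {m n : ℕ} {a b : Fin m × Fin n} (h : (rectGrid m n).Adj a b) :
    colr b = colr a + 1 := by
  rw [rectGrid, SimpleGraph.fromRel_adj] at h
  have key : ∀ x y : ZMod 2, x = y + 1 → y = x + 1 := by decide
  rcases h.2 with (⟨h1, hc⟩ | ⟨h1, hc⟩) | (⟨h1, hc⟩ | ⟨h1, hc⟩)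
  · simp only [colr, h1]; rw [← hc]; push_cast; ring
  · simp only [colr, h1]; rw [← hc]; push_cast; ring
  · refine key _ _ ?_; simp only [colr, h1]; rw [← hc]; push_cast; ring
  · refine key _ _ ?_; simp only [colr, h1]; rw [← hc]; push_cast; ring

lemma walk_parity {m n : ℕ} {u v : Fin m × Fin n} (p : (rectGrid m n).Walk u v) :
    colr v = colr u + (p.length : ZMod 2) := by
  induction p with
  | nil => simp
  | cons h q ih =>
    rw [SimpleGraph.Walk.length_cons, ih, adj_colr h]
    push_cast
    ring

lemma necessity {m n : ℕ} (h : ∃ (u : Fin m × Fin n) (p : (rectGrid m n).Walk u u),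
    p.IsHamiltonianCycle) : Even (m * n) := by
  obtain ⟨u, p, hp⟩ := h
  have := walk_parity p
  rw [left_eq_add, hp.length_eq] at this
  simp only [Fintype.card_prod, Fintype.card_fin] at this
  rw [ZMod.natCast_eq_zero_iff] at this
  exact even_iff_two_dvd.mpr this

/-! ### The snake (boustrophedon) list -/

def natAdj (a b : ℕ × ℕ) : Prop :=
  (a.1 = b.1 ∧ (a.2 + 1 = b.2 ∨ b.2 + 1 = a.2)) ∨
  (a.2 = b.2 ∧ (a.1 + 1 = b.1 ∨ b.1 + 1 = a.1))

def pairBlock (n t : ℕ) : List (ℕ × ℕ) :=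
  ((List.range (n-1)).map fun j => (2*t, j+1)) ++
  (((List.range (n-1)).reverse).map fun j => (2*t+1, j+1))

def snakeL (h n : ℕ) : List (ℕ × ℕ) :=
  ((List.range h).flatMap (pairBlock n)) ++ ((List.range (2*h)).reverse.map fun i => (i, 0))

lemma mem_pairBlock {n t : ℕ} {p : ℕ × ℕ} (hp : p ∈ pairBlock n t) :
    (p.1 = 2*t ∨ p.1 = 2*t+1) ∧ 1 ≤ p.2 ∧ p.2 ≤ n - 1 := by
  simp only [pairBlock, mem_append, mem_map, mem_reverse, mem_range] at hp
  rcases hp with ⟨j, hj, rfl⟩ | ⟨j, hj, rfl⟩ <;> simp <;> omega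

lemma pairBlock_ne_nil {n t : ℕ} (hn : 2 ≤ n) : pairBlock n t ≠ [] := by
  simp only [pairBlock, ne_eq, append_eq_nil_iff, map_eq_nil_iff, range_eq_nil, reverse_eq_nil_iff]
  omega

lemma pairBlock_head? {n t : ℕ} (hn : 2 ≤ n) : (pairBlock n t).head? = some (2*t, 1) := by
  obtain ⟨k, rfl⟩ : ∃ k, n = k + 2 := ⟨n - 2, by omega⟩
  simp [pairBlock, head?_append, List.range_succ_eq_map]

lemma pairBlock_getLast? {n t : ℕ} (hn : 2 ≤ n) :
    (pairBlock n t).getLast? = some (2*t+1, 1) := by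
  obtain ⟨k, rfl⟩ : ∃ k, n = k + 2 := ⟨n - 2, by omega⟩
  rw [pairBlock, getLast?_append_of_ne_nil]
  · rw [getLast?_map]
    simp [List.range_succ_eq_map]
  · simp [List.range_succ_eq_map]

lemma pairBlock_nodup {n t : ℕ} : (pairBlock n t).Nodup := by
  rw [pairBlock, nodup_append]
  refine ⟨?_, ?_, ?_⟩
  · exact nodup_range.map (fun a b hab => by simpa using hab)
  · exact (List.nodup_reverse.mpr nodup_range).map (fun a b hab => by simpa using hab)
  · intro p hp q hq hpq; subst hpq
    simp only [mem_map, mem_reverse, mem_range] at hp hq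
    obtain ⟨j, _, rfl⟩ := hp
    obtain ⟨j', _, h'⟩ := hq
    simp at h'

lemma pairBlock_chain' {n t : ℕ} (hn : 2 ≤ n) : Chain' natAdj (pairBlock n t) := by
  obtain ⟨k, rfl⟩ : ∃ k, n = k + 2 := ⟨n - 2, by omega⟩
  rw [pairBlock, List.Chain', isChain_append]
  refine ⟨?_, ?_, ?_⟩
  · rw [isChain_map]
    obtain ⟨k', hk⟩ : ∃ k', k + 2 - 1 = k' + 1 := ⟨k, by omega⟩
    rw [hk, isChain_range_succ]
    intro j hj
    exact Or.inl ⟨rfl, Or.inl rfl⟩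
  · rw [isChain_map, isChain_reverse]
    obtain ⟨k', hk⟩ : ∃ k', k + 2 - 1 = k' + 1 := ⟨k, by omega⟩
    rw [hk, isChain_range_succ]
    intro j hj
    exact Or.inl ⟨rfl, Or.inr rfl⟩
  · intro x hx y hy
    rw [getLast?_map] at hx
    rw [head?_map, head?_reverse] at hy
    obtain ⟨k', hk⟩ : ∃ k', k + 2 - 1 = k' + 1 := ⟨k, by omega⟩
    rw [hk, List.range_succ] at hx hy
    simp at hx hy
    subst hx; subst hy
    exact Or.inr ⟨rfl, Or.inl rfl⟩

lemma bind_getLast? {n h : ℕ} (hn : 2 ≤ n) (hh : 1 ≤ h) :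
    ((List.range h).flatMap (pairBlock n)).getLast? = some (2*h-1, 1) := by
  obtain ⟨h', rfl⟩ : ∃ h', h = h' + 1 := ⟨h - 1, by omega⟩
  rw [List.range_succ, List.flatMap_append]
  simp only [List.flatMap_cons, List.flatMap_nil, List.append_nil]
  rw [getLast?_append_of_ne_nil _ (pairBlock_ne_nil hn), pairBlock_getLast? hn]
  have : 2*(h'+1)-1 = 2*h'+1 := by omega
  rw [this]

lemma bind_chain' {n : ℕ} (hn : 2 ≤ n) (h : ℕ) :
    Chain' natAdj ((List.range h).flatMap (pairBlock n)) := by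
  induction h with
  | zero => simp [List.Chain']
  | succ h ih =>
    rw [List.range_succ, List.flatMap_append]
    simp only [List.flatMap_cons, List.flatMap_nil, List.append_nil]
    rw [List.Chain', isChain_append]
    refine ⟨ih, pairBlock_chain' hn, ?_⟩
    intro x hx y hy
    rcases Nat.eq_zero_or_pos h with rfl | hh
    · simp at hx
    · rw [bind_getLast? hn hh] at hx
      rw [pairBlock_head? hn] at hy
      simp at hx hy
      subst hx; subst hy
      exact Or.inr ⟨rfl, Or.inl (by omega)⟩

lemma snakeL_length {h n : ℕ} (hn : 1 ≤ n) : (snakeL h n).length = 2*h*n := by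
  rw [snakeL, length_append, length_map, length_reverse, length_range]
  rw [List.length_flatMap]
  have : ∀ t ∈ List.range h, (pairBlock n t).length = 2 * (n-1) := by
    intro t _
    simp [pairBlock, Nat.two_mul]
  rw [List.map_congr_left this, List.map_const', List.sum_replicate, length_range, smul_eq_mul]
  obtain ⟨k, rfl⟩ : ∃ k, n = k + 1 := ⟨n - 1, by omega⟩
  simp only [Nat.add_sub_cancel]
  ring

lemma snakeL_nodup {h n : ℕ} : (snakeL h n).Nodup := by
  rw [snakeL, nodup_append]
  refine ⟨?_, ?_, ?_⟩
  · rw [List.nodup_flatMap]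
    refine ⟨fun t _ => pairBlock_nodup, ?_⟩
    refine (List.pairwise_lt_range (n := h)).imp ?_
    intro a b hab
    intro p hpa hpb
    have h1 := mem_pairBlock hpa
    have h2 := mem_pairBlock hpb
    omega
  · exact (List.nodup_reverse.mpr nodup_range).map (fun a b hab => by simpa using hab)
  · intro p hp q hq hpq; subst hpq
    simp only [List.mem_flatMap, mem_range] at hp
    obtain ⟨t, _, hpB⟩ := hp
    have := mem_pairBlock hpB
    simp only [mem_map, mem_reverse, mem_range] at hq
    obtain ⟨i, _, rfl⟩ := hq
    simp at this

lemma returnPart_ne_nil {h : ℕ} (hh : 1 ≤ h) :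
    ((List.range (2*h)).reverse.map fun i => ((i, 0) : ℕ × ℕ)) ≠ [] := by
  simp only [ne_eq, map_eq_nil_iff, reverse_eq_nil_iff, range_eq_nil]
  omega

lemma snakeL_chain' {h n : ℕ} (hn : 2 ≤ n) (hh : 1 ≤ h) :
    Chain' natAdj (snakeL h n) := by
  rw [snakeL, List.Chain', isChain_append]
  refine ⟨bind_chain' hn h, ?_, ?_⟩
  · rw [isChain_map, isChain_reverse]
    obtain ⟨k, hk⟩ : ∃ k, 2*h = k + 1 := ⟨2*h - 1, by omega⟩
    rw [hk, isChain_range_succ]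
    intro i hi
    exact Or.inr ⟨rfl, Or.inr rfl⟩
  · intro x hx y hy
    rw [bind_getLast? hn hh] at hx
    rw [head?_map, head?_reverse] at hy
    obtain ⟨k, hk⟩ : ∃ k, 2*h = k + 1 := ⟨2*h - 1, by omega⟩
    rw [hk, List.range_succ] at hy
    simp at hx hy
    subst hx
    subst hy
    refine Or.inl ⟨by omega, Or.inr (by omega)⟩

lemma snakeL_head? {h n : ℕ} (hn : 2 ≤ n) (hh : 1 ≤ h) :
    (snakeL h n).head? = some (0, 1) := by
  obtain ⟨h', rfl⟩ : ∃ h', h = h' + 1 := ⟨h - 1, by omega⟩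
  rw [snakeL, List.range_succ_eq_map, List.flatMap_cons, List.append_assoc, head?_append]
  rw [pairBlock_head? hn]
  simp

lemma snakeL_getLast? {h n : ℕ} (hh : 1 ≤ h) :
    (snakeL h n).getLast? = some (0, 0) := by
  rw [snakeL, getLast?_append_of_ne_nil _ (returnPart_ne_nil hh), getLast?_map]
  rw [getLast?_reverse]
  obtain ⟨k, hk⟩ : ∃ k, 2*h = k + 1 := ⟨2*h - 1, by omega⟩
  rw [hk, List.range_succ_eq_map]
  simp

lemma snakeL_bounds {h n : ℕ} (hn : 1 ≤ n) {p : ℕ × ℕ} (hp : p ∈ snakeL h n) :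
    p.1 < 2*h ∧ p.2 < n := by
  rw [snakeL, mem_append] at hp
  rcases hp with hp | hp
  · simp only [List.mem_flatMap, mem_range] at hp
    obtain ⟨t, ht, hpB⟩ := hp
    have := mem_pairBlock hpB
    omega
  · simp only [mem_map, mem_reverse, mem_range] at hp
    obtain ⟨i, hi, rfl⟩ := hp
    simp
    omega

lemma chain_imp_mem {α : Type*} {R S : α → α → Prop} :
    ∀ {l : List α} {u : α}, List.Chain R u l →
      (∀ a ∈ u :: l, ∀ b ∈ u :: l, R a b → S a b) → List.Chain S u l
  | [], u, _, _ => List.Chain.nil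
  | w :: t, u, h, hm => by
    simp only [List.Chain] at h ⊢
    rw [List.chain_cons] at h ⊢
    refine ⟨hm u (by simp) w (by simp) h.1, chain_imp_mem h.2 ?_⟩
    intro a ha b hb hr
    exact hm a (by simp at ha ⊢; tauto) b (by simp at hb ⊢; tauto) hr

lemma chain'_imp_mem {α : Type*} {R S : α → α → Prop} {l : List α}
    (h : List.Chain' R l) (hm : ∀ a ∈ l, ∀ b ∈ l, R a b → S a b) :
    List.Chain' S l := by
  cases l with
  | nil => exact List.isChain_nil
  | cons u t => exact chain_imp_mem h hm

/-! ### Bridging to `Fin` -/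

def emb (m n : ℕ) (hm : 0 < m) (hn : 0 < n) (p : ℕ × ℕ) : Fin m × Fin n :=
  (⟨p.1 % m, Nat.mod_lt _ hm⟩, ⟨p.2 % n, Nat.mod_lt _ hn⟩)

lemma emb_inj {m n : ℕ} (hm : 0 < m) (hn : 0 < n) {p q : ℕ × ℕ}
    (hp : p.1 < m ∧ p.2 < n) (hq : q.1 < m ∧ q.2 < n)
    (h : emb m n hm hn p = emb m n hm hn q) : p = q := by
  rw [emb, emb, Prod.ext_iff, Fin.ext_iff, Fin.ext_iff] at h
  simp only [Nat.mod_eq_of_lt hp.1, Nat.mod_eq_of_lt hp.2,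
    Nat.mod_eq_of_lt hq.1, Nat.mod_eq_of_lt hq.2] at h
  exact Prod.ext h.1 h.2

lemma natAdj_emb {m n : ℕ} (hm : 0 < m) (hn : 0 < n) {p q : ℕ × ℕ}
    (hp : p.1 < m ∧ p.2 < n) (hq : q.1 < m ∧ q.2 < n) (hadj : natAdj p q) :
    (rectGrid m n).Adj (emb m n hm hn p) (emb m n hm hn q) := by
  rw [rectGrid, SimpleGraph.fromRel_adj]
  have hne : p ≠ q := by
    rintro rfl
    rcases hadj with ⟨_, h⟩ | ⟨_, h⟩ <;> omega
  constructor
  · intro heq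
    exact hne (emb_inj hm hn hp hq heq)
  · have e1 : ((emb m n hm hn p).1 : ℕ) = p.1 := Nat.mod_eq_of_lt hp.1
    have e2 : ((emb m n hm hn p).2 : ℕ) = p.2 := Nat.mod_eq_of_lt hp.2
    have e3 : ((emb m n hm hn q).1 : ℕ) = q.1 := Nat.mod_eq_of_lt hq.1
    have e4 : ((emb m n hm hn q).2 : ℕ) = q.2 := Nat.mod_eq_of_lt hq.2
    have f1 : p.1 = q.1 → (emb m n hm hn p).1 = (emb m n hm hn q).1 := by
      intro hh; rw [Fin.ext_iff]; omega
    have f2 : p.2 = q.2 → (emb m n hm hn p).2 = (emb m n hm hn q).2 := by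
      intro hh; rw [Fin.ext_iff]; omega
    rcases hadj with ⟨h1, h2 | h2⟩ | ⟨h1, h2 | h2⟩
    · exact Or.inl (Or.inl ⟨f1 h1, by omega⟩)
    · exact Or.inr (Or.inl ⟨(f1 h1).symm, by omega⟩)
    · exact Or.inl (Or.inr ⟨f2 h1, by omega⟩)
    · exact Or.inr (Or.inr ⟨(f2 h1).symm, by omega⟩)

lemma exists_ham_of_even_left {m n : ℕ} (hm : 2 ≤ m) (hn : 2 ≤ n) (hme : Even m) :
    ∃ u, ∃ p : (rectGrid m n).Walk u u, p.IsHamiltonianCycle := by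
  obtain ⟨h, rfl⟩ : ∃ h, m = 2*h := by
    obtain ⟨c, hc⟩ := hme; exact ⟨c, by omega⟩
  have hh : 1 ≤ h := by omega
  have hm0 : 0 < 2*h := by omega
  have hn0 : 0 < n := by omega
  have hn1 : 1 ≤ n := by omega
  set f := emb (2*h) n hm0 hn0 with hf
  set L := (snakeL h n).map f with hL
  have hlen : L.length = Fintype.card (Fin (2*h) × Fin n) := by
    rw [hL, length_map, snakeL_length hn1]
    simp
  have h4 : 4 ≤ L.length := by
    rw [hL, length_map, snakeL_length hn1]
    nlinarith
  have hnd : L.Nodup := by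
    refine snakeL_nodup.map_on ?_
    intro x hx y hy hxy
    exact emb_inj hm0 hn0 (snakeL_bounds hn1 hx) (snakeL_bounds hn1 hy) hxy
  have hch : L.Chain' (rectGrid (2*h) n).Adj := by
    rw [hL, List.Chain', isChain_map]
    refine chain'_imp_mem (snakeL_chain' hn hh) ?_
    intro a ha b hb hr
    exact natAdj_emb hm0 hn0 (snakeL_bounds hn1 ha) (snakeL_bounds hn1 hb) hr
  have hLne : L ≠ [] := by
    intro hnil
    rw [hnil] at h4; simp at h4
  refine hamOfList _ L hlen h4 hnd hch ?_
  have hlast : L.getLast (by intro hc; exact hLne hc) = f (0, 0) := by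
    have h1 : L.getLast? = some (f (0, 0)) := by
      rw [hL, getLast?_map, snakeL_getLast? hh]
      rfl
    rwa [List.getLast?_eq_getLast (by intro hc; exact hLne hc), Option.some_inj] at h1
  have hhead : L.head (by intro hc; exact hLne hc) = f (0, 1) := by
    have h1 : L.head? = some (f (0, 1)) := by
      rw [hL, head?_map, snakeL_head? hn hh]
      rfl
    rwa [List.head?_eq_head, Option.some_inj] at h1
  rw [hlast, hhead]
  exact natAdj_emb hm0 hn0 ⟨by omega, by omega⟩ ⟨by omega, by omega⟩
    (Or.inl ⟨rfl, Or.inl rfl⟩)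

def swapHom (m n : ℕ) : rectGrid n m →g rectGrid m n where
  toFun := Prod.swap
  map_rel' := by
    intro a b hab
    rw [rectGrid, SimpleGraph.fromRel_adj] at hab ⊢
    obtain ⟨hne, hr⟩ := hab
    refine ⟨fun hc => hne (Prod.swap_injective hc), ?_⟩
    simp only [Prod.fst_swap, Prod.snd_swap]
    tauto

lemma sufficiency {m n : ℕ} (hm : 2 ≤ m) (hn : 2 ≤ n) (he : Even (m * n)) :
    ∃ u, ∃ p : (rectGrid m n).Walk u u, p.IsHamiltonianCycle := by
  rcases Nat.even_mul.mp he with hme | hne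
  · exact exists_ham_of_even_left hm hn hme
  · obtain ⟨u, p, hp⟩ := exists_ham_of_even_left hn hm hne
    exact ⟨Prod.swap u, p.map (swapHom m n),
      hp.map (f := swapHom m n) Prod.swap_bijective⟩

end RectGridAux

/-- For `m, n ≥ 2`, the m×n rectangular grid graph has a Hamiltonian
cycle if and only if `m * n` is even; in particular, if both `m` and `n` are odd,
it has no Hamiltonian cycle. -/
theorem stmt_14 (m n : ℕ) (hm : 2 ≤ m) (hn : 2 ≤ n) :
    ((∃ (u : Fin m × Fin n) (p : (rectGrid m n).Walk u u),
        p.IsHamiltonianCycle) ↔ Even (m * n)) ∧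
    (Odd m → Odd n →
      ¬ ∃ (u : Fin m × Fin n) (p : (rectGrid m n).Walk u u),
        p.IsHamiltonianCycle) := by
  constructor
  · exact ⟨RectGridAux.necessity, RectGridAux.sufficiency hm hn⟩
  · intro hom hon hex
    have := RectGridAux.necessity hex
    rw [Nat.even_mul] at this
    rcases this with h | h
    · exact (Nat.not_even_iff_odd.mpr hom) h
    · exact (Nat.not_even_iff_odd.mpr hon) h
end
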